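/- Let V_h ⊂ H¹(Ω)^d and M_h = W_h ⊂ H¹(Ω) be finite element spaces, and let (u_h, p̃_h, q_h) : (0,T] → V_h × M_h × W_h solve the semi-discrete gel system: β(∇u_h, ∇v_h) − (p̃_h, div v_h) = ⟨f, v_h⟩ for all v_h ∈ V_h; (div u_h, φ_h) = (q_h, φ_h) for all φ_h ∈ M_h; ((q_h)_t, ψ_h) + κ(∇(p̃_h + αq_h), ∇ψ_h) = 0 for all ψ_h ∈ W_h; with f time-independent. Set p_h := p̃_h + αq_h. Then the discrete energy law holds: J_h(t) + κ∫₀ᵗ‖∇p_h(s)‖²_{L²} ds = J_h(0) for all t ∈ (0,T], where J_h(t) := ½[β‖∇u_h(t)‖² + α‖q_h(t)‖² − 2⟨f, u_h(t)⟩]. -/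

import Mathlib

open scoped RealInnerProductSpace

/-!
Differentiating the energy `J_h` along the solution and testing the three equations with
`u_h'`, `p̃_h` (in the time derivative of the divergence constraint) and `p_h` shows that every
cross term cancels, leaving `J_h' = -κ ‖∇p_h‖²`; the energy law is this rate integrated over
`[0, t]`.
-/

open Set

theorem HasDerivAt.eq_of_eqOn_Icc {F : Type*} [NormedAddCommGroup F] [NormedSpace ℝ F]
    {f g : ℝ → F} {f' g' : F} {a b s : ℝ} (hab : a < b) (hs : s ∈ Icc a b)
    (hfg : EqOn f g (Icc a b)) (hf : HasDerivAt f f' s) (hg : HasDerivAt g g' s) :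
    f' = g' :=
  (uniqueDiffOn_Icc hab s hs).eq_deriv _ hf.hasDerivWithinAt
    (hg.hasDerivWithinAt.congr_of_mem (fun _ hx => hfg hx) hs)

theorem HasDerivAt.inner_clm_apply_const {E F : Type*} [NormedAddCommGroup E]
    [NormedSpace ℝ E] [NormedAddCommGroup F] [InnerProductSpace ℝ F] (L : E →L[ℝ] F)
    {u : ℝ → E} {u' : E} {s : ℝ} (hu : HasDerivAt u u' s) (w : F) :
    HasDerivAt (fun t => ⟪L (u t), w⟫) ⟪L u', w⟫ s := by
  simpa using (L.hasFDerivAt.comp_hasDerivAt s hu).inner ℝ (hasDerivAt_const s w)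

theorem add_mul_integral_eq_of_hasDerivAt {J g : ℝ → ℝ} {κ a b : ℝ} (hab : a ≤ b)
    (hJ : ∀ s ∈ Icc a b, HasDerivAt J (-(κ * g s)) s) (hg : ContinuousOn g (Icc a b)) :
    J b + κ * ∫ s in a..b, g s = J a := by
  have hint : IntervalIntegrable (fun s => -(κ * g s)) MeasureTheory.volume a b :=
    ((hg.const_smul κ).neg).intervalIntegrable_of_Icc hab
  have hFTC := intervalIntegral.integral_eq_sub_of_hasDerivAt
    (fun s hs => hJ s (uIcc_of_le hab ▸ hs)) hint
  rw [intervalIntegral.integral_neg, intervalIntegral.integral_const_mul] at hFTC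
  linarith

section GelSystem

variable {L2 Vh Mh GV GM : Type*}
  [NormedAddCommGroup L2] [InnerProductSpace ℝ L2]
  [NormedAddCommGroup Vh] [InnerProductSpace ℝ Vh]
  [NormedAddCommGroup Mh] [InnerProductSpace ℝ Mh]
  [NormedAddCommGroup GV] [InnerProductSpace ℝ GV]
  [NormedAddCommGroup GM] [InnerProductSpace ℝ GM]

noncomputable def gelEnergy (α β : ℝ) (gradV : Vh →L[ℝ] GV) (emb : Mh →L[ℝ] L2)
    (f : Vh →L[ℝ] ℝ) (u : Vh) (q : Mh) : ℝ :=
  (1/2) * (β * ‖gradV u‖^2 + α * ‖emb q‖^2 - 2 * f u)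

theorem hasDerivAt_gelEnergy (α β : ℝ) (gradV : Vh →L[ℝ] GV) (emb : Mh →L[ℝ] L2)
    (f : Vh →L[ℝ] ℝ) {u : ℝ → Vh} {q : ℝ → Mh} {u' : Vh} {q' : Mh} {s : ℝ}
    (hu : HasDerivAt u u' s) (hq : HasDerivAt q q' s) :
    HasDerivAt (fun t => gelEnergy α β gradV emb f (u t) (q t))
      (β * ⟪gradV (u s), gradV u'⟫ + α * ⟪emb (q s), emb q'⟫ - f u') s := by
  have hgu := (gradV.hasFDerivAt.comp_hasDerivAt s hu).norm_sq
  have heq := (emb.hasFDerivAt.comp_hasDerivAt s hq).norm_sq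
  have hfu := f.hasFDerivAt.comp_hasDerivAt s hu
  refine ((((hgu.const_mul β).add (heq.const_mul α)).sub (hfu.const_mul 2)).const_mul
    (1/2)).congr_deriv ?_
  simp only [Function.comp_apply]
  ring

theorem gelEnergy_rate_eq (α β κ : ℝ) (dvg : Vh →L[ℝ] L2) (gradV : Vh →L[ℝ] GV)
    (emb : Mh →L[ℝ] L2) (gradM : Mh →L[ℝ] GM) (f : Vh →L[ℝ] ℝ) {u u' : Vh} {p q q' : Mh}
    (hmom : β * ⟪gradV u, gradV u'⟫ - ⟪emb p, dvg u'⟫ = f u')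
    (hdiv : ⟪dvg u', emb p⟫ = ⟪emb q', emb p⟫)
    (hflow : ∀ ψ : Mh, ⟪emb q', emb ψ⟫ + κ * ⟪gradM (p + α • q), gradM ψ⟫ = 0) :
    β * ⟪gradV u, gradV u'⟫ + α * ⟪emb q, emb q'⟫ - f u'
      = -(κ * ‖gradM (p + α • q)‖^2) := by
  have hflow_p := hflow (p + α • q)
  rw [← real_inner_self_eq_norm_sq]
  simp only [map_add, map_smul, inner_add_right, real_inner_smul_right] at hflow_p ⊢
  linear_combination hmom + hflow_p + hdiv + real_inner_comm (dvg u') (emb p)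
    + α * real_inner_comm (emb q') (emb q)

end GelSystem

/- `dvg` is the divergence on `V_h`, `gradV` and `gradM` the gradients on `V_h` and `M_h`, and
`emb` the inclusion `M_h ↪ L²(Ω)`. -/
theorem gel_semidiscrete_energy_law_general
    {L2 Vh Mh GV GM : Type*}
    [NormedAddCommGroup L2] [InnerProductSpace ℝ L2]
    [NormedAddCommGroup Vh] [InnerProductSpace ℝ Vh]
    [NormedAddCommGroup Mh] [InnerProductSpace ℝ Mh]
    [NormedAddCommGroup GV] [InnerProductSpace ℝ GV]
    [NormedAddCommGroup GM] [InnerProductSpace ℝ GM]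
    (T α β κ : ℝ)
    (dvg : Vh →L[ℝ] L2) (gradV : Vh →L[ℝ] GV)
    (emb : Mh →L[ℝ] L2) (gradM : Mh →L[ℝ] GM)
    (f : Vh →L[ℝ] ℝ)
    (uh uh' : ℝ → Vh) (pth : ℝ → Mh) (qh qh' : ℝ → Mh)
    (huh : ∀ t ∈ Set.Icc (0:ℝ) T, HasDerivAt uh (uh' t) t)
    (hqh : ∀ t ∈ Set.Icc (0:ℝ) T, HasDerivAt qh (qh' t) t)
    (hptcont : ContinuousOn pth (Set.Icc (0:ℝ) T))
    (heq1 : ∀ t ∈ Set.Icc (0:ℝ) T, ∀ vh : Vh,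
      β * ⟪gradV (uh t), gradV vh⟫ - ⟪emb (pth t), dvg vh⟫ = f vh)
    (heq2 : ∀ t ∈ Set.Icc (0:ℝ) T, ∀ φh : Mh,
      ⟪dvg (uh t), emb φh⟫ = ⟪emb (qh t), emb φh⟫)
    (heq3 : ∀ t ∈ Set.Icc (0:ℝ) T, ∀ ψh : Mh,
      ⟪emb (qh' t), emb ψh⟫ + κ * ⟪gradM (pth t + α • qh t), gradM ψh⟫ = 0)
    (Jh : ℝ → ℝ)
    (hJh : ∀ t : ℝ, Jh t
      = (1/2) * (β * ‖gradV (uh t)‖^2 + α * ‖emb (qh t)‖^2 - 2 * f (uh t))) :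
    ∀ t ∈ Set.Ioc (0:ℝ) T,
      Jh t + κ * ∫ s in (0:ℝ)..t, ‖gradM (pth s + α • qh s)‖^2 = Jh 0 := by
  rintro t ⟨ht, htT⟩
  have hsub : Icc 0 t ⊆ Icc 0 T := Icc_subset_Icc le_rfl htT
  have hJ : Jh = fun s => gelEnergy α β gradV emb f (uh s) (qh s) := funext hJh
  refine add_mul_integral_eq_of_hasDerivAt ht.le (fun s hs => ?_) ?_
  · have hs' := hsub hs
    have hdiv : ⟪dvg (uh' s), emb (pth s)⟫ = ⟪emb (qh' s), emb (pth s)⟫ :=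
      HasDerivAt.eq_of_eqOn_Icc ht hs (fun r hr => heq2 r (hsub hr) (pth s))
        ((huh s hs').inner_clm_apply_const dvg _) ((hqh s hs').inner_clm_apply_const emb _)
    rw [hJ, ← gelEnergy_rate_eq α β κ dvg gradV emb gradM f (heq1 s hs' _) hdiv (heq3 s hs')]
    exact hasDerivAt_gelEnergy α β gradV emb f (huh s hs') (hqh s hs')
  · have hqcont : ContinuousOn qh (Icc 0 t) :=
      continuousOn_of_forall_continuousAt fun s hs => (hqh s (hsub hs)).continuousAt
    exact (gradM.continuous.comp_continuousOn
      ((hptcont.mono hsub).add (hqcont.const_smul α))).norm.pow 2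

/-- discrete energy law for the semi-discrete finite element gel system.
If `(u_h, p̃_h, q_h) : (0,T] → V_h × M_h × W_h` (with `M_h = W_h ⊂ H¹(Ω)`) solves
`β(∇u_h, ∇v_h) − (p̃_h, div v_h) = ⟨f, v_h⟩`, `(div u_h, φ_h) = (q_h, φ_h)`,
`((q_h)_t, ψ_h) + κ(∇(p̃_h + αq_h), ∇ψ_h) = 0` with `f` time-independent, and
`p_h := p̃_h + αq_h`, then `J_h(t) + κ∫₀ᵗ‖∇p_h(s)‖² ds = J_h(0)` for all
`t ∈ (0,T]`, where `J_h(t) := ½[β‖∇u_h(t)‖² + α‖q_h(t)‖² − 2⟨f, u_h(t)⟩]`.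
Here `Vh` plays the role of `V_h`, `Mh` of `M_h = W_h`, `emb : M_h ↪ L²(Ω)`,
and `gradM` the gradient on `M_h`. -/
theorem gel_semidiscrete_energy_law
    {L2 Vh Mh GV GM : Type*}
    [NormedAddCommGroup L2] [InnerProductSpace ℝ L2]
    [NormedAddCommGroup Vh] [InnerProductSpace ℝ Vh]
    [NormedAddCommGroup Mh] [InnerProductSpace ℝ Mh]
    [NormedAddCommGroup GV] [InnerProductSpace ℝ GV]
    [NormedAddCommGroup GM] [InnerProductSpace ℝ GM]
    (T α β κ : ℝ) (hT : 0 < T) (hα : 0 < α) (hβ : 0 < β) (hκ : 0 < κ)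
    (dvg : Vh →L[ℝ] L2) (gradV : Vh →L[ℝ] GV)
    (emb : Mh →L[ℝ] L2) (gradM : Mh →L[ℝ] GM)
    (f : Vh →L[ℝ] ℝ)
    (uh uh' : ℝ → Vh) (pth : ℝ → Mh) (qh qh' : ℝ → Mh)
    (huh : ∀ t ∈ Set.Icc (0:ℝ) T, HasDerivAt uh (uh' t) t)
    (hqh : ∀ t ∈ Set.Icc (0:ℝ) T, HasDerivAt qh (qh' t) t)
    (hptcont : ContinuousOn pth (Set.Icc (0:ℝ) T))
    (heq1 : ∀ t ∈ Set.Icc (0:ℝ) T, ∀ vh : Vh,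
      β * ⟪gradV (uh t), gradV vh⟫ - ⟪emb (pth t), dvg vh⟫ = f vh)
    (heq2 : ∀ t ∈ Set.Icc (0:ℝ) T, ∀ φh : Mh,
      ⟪dvg (uh t), emb φh⟫ = ⟪emb (qh t), emb φh⟫)
    (heq3 : ∀ t ∈ Set.Icc (0:ℝ) T, ∀ ψh : Mh,
      ⟪emb (qh' t), emb ψh⟫ + κ * ⟪gradM (pth t + α • qh t), gradM ψh⟫ = 0)
    (Jh : ℝ → ℝ)
    (hJh : ∀ t : ℝ, Jh t
      = (1/2) * (β * ‖gradV (uh t)‖^2 + α * ‖emb (qh t)‖^2 - 2 * f (uh t))) :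
    ∀ t ∈ Set.Ioc (0:ℝ) T,
      Jh t + κ * ∫ s in (0:ℝ)..t, ‖gradM (pth s + α • qh s)‖^2 = Jh 0 :=
  gel_semidiscrete_energy_law_general T α β κ dvg gradV emb gradM f uh uh' pth qh qh' huh hqh
    hptcont heq1 heq2 heq3 Jh hJh
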